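/- For all natural numbers x ≥ 1, e ≥ 0 and real numbers c, d with 0 < c < 32 and 0 < d < 30x, the inequality (1 − d/(30x + c)) < (1 − d/(30(2x+e+1) + c))·(1 − d/(30(2x+e+2) + c)) holds. -/

import Mathlib

/-! Expanding the product, `(1 - d/B)(1 - d/C) = 1 - d (1/B + 1/C) + d²/(BC)`, so it suffices that
`1/B + 1/C ≤ 1/A`, which is equivalent to `A² ≤ (B - A)(C - A)`. For `A = 30x + c` the two
differences are `30(x + e + 1)` and `30(x + e + 2)`, and the bound holds as soon as `0 ≤ c ≤ 42`. -/

lemma one_sub_div_lt_mul_one_sub_div {a b c d : ℝ} (hb : 0 < b) (hc : 0 < c) (hd : 0 < d)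
    (h : b⁻¹ + c⁻¹ ≤ a⁻¹) : 1 - d / a < (1 - d / b) * (1 - d / c) :=
  calc 1 - d / a ≤ 1 - d * (b⁻¹ + c⁻¹) := by
        rw [div_eq_mul_inv]; gcongr
    _ < 1 - d * (b⁻¹ + c⁻¹) + d ^ 2 / (b * c) := by
        have : 0 < d ^ 2 / (b * c) := by positivity
        linarith
    _ = (1 - d / b) * (1 - d / c) := by field_simp; ring

lemma inv_add_inv_le_inv_of_sq_le {a b c : ℝ} (ha : 0 < a) (hab : a < b) (hac : a < c)
    (h : a ^ 2 ≤ (b - a) * (c - a)) : b⁻¹ + c⁻¹ ≤ a⁻¹ := by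
  have hb : 0 < b := ha.trans hab
  have hc : 0 < c := ha.trans hac
  rw [inv_add_inv hb.ne' hc.ne', div_le_iff₀ (mul_pos hb hc), inv_mul_eq_div, le_div_iff₀ ha]
  nlinarith

lemma sq_add_le_mul_of_le {x e c : ℝ} (hx : 0 ≤ x) (he : 0 ≤ e) (hc0 : 0 ≤ c) (hc : c ≤ 42) :
    (30 * x + c) ^ 2 ≤ (30 * (x + e + 1)) * (30 * (x + e + 2)) := by
  nlinarith [mul_nonneg hx he, mul_nonneg he he, mul_nonneg hx (by linarith : 0 ≤ 42 - c)]

theorem stmt_4_general (x e : ℕ) (c d : ℝ) (hc0 : 0 < c) (hc : c < 32)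
    (hd0 : 0 < d) :
    (1 - d / (30 * x + c)) <
      (1 - d / (30 * (2 * x + e + 1) + c)) * (1 - d / (30 * (2 * x + e + 2) + c)) := by
  have hx : (0 : ℝ) ≤ x := x.cast_nonneg
  have he : (0 : ℝ) ≤ e := e.cast_nonneg
  apply one_sub_div_lt_mul_one_sub_div (by positivity) (by positivity) hd0
  apply inv_add_inv_le_inv_of_sq_le (by positivity) (by linarith) (by linarith)
  convert sq_add_le_mul_of_le hx he hc0.le (by linarith) using 2 <;> ring

theorem stmt_4 (x e : ℕ) (hx : 1 ≤ x) (c d : ℝ) (hc0 : 0 < c) (hc : c < 32)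
    (hd0 : 0 < d) (hd : d < 30 * x) :
    (1 - d / (30 * x + c)) <
      (1 - d / (30 * (2 * x + e + 1) + c)) * (1 - d / (30 * (2 * x + e + 2) + c)) :=
  stmt_4_general x e c d hc0 hc hd0
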